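/- Let $X$ be a Banach space and $f : [a,b] \to X$ differentiable with $\|f'(s)\| \le M$ for $s \in [a,b]$. Then $\left\| \int_a^b f(s)\,ds - (b-a)\cdot\frac{f\left(\frac{3a+b}{4}\right)+f\left(\frac{a+3b}{4}\right)}{2} \right\| \le \frac{1}{8}(b-a)^2 M$. -/
import Mathlib


open MeasureTheory intervalIntegral

lemma midpoint_bound14 {X : Type*} [NormedAddCommGroup X] [NormedSpace ℝ X] [CompleteSpace X]
    {a b : ℝ} (hab : a ≤ b) {f f' : ℝ → X}
    (hderiv : ∀ t ∈ Set.Icc a b, HasDerivAt f (f' t) t)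
    {M : ℝ} (hM : ∀ s ∈ Set.Icc a b, ‖f' s‖ ≤ M) :
    ‖(∫ s in a..b, f s) - (b - a) • f ((a + b) / 2)‖ ≤ M * (b - a) ^ 2 / 4 := by
  set c : ℝ := (a + b) / 2 with hc
  have hac : a ≤ c := by rw [hc]; linarith
  have hcb : c ≤ b := by rw [hc]; linarith
  have hcmem : c ∈ Set.Icc a b := ⟨hac, hcb⟩
  have hfc : ContinuousOn f (Set.Icc a b) := fun t ht =>
    (hderiv t ht).continuousAt.continuousWithinAt
  have hfi : IntervalIntegrable f volume a b := by
    apply ContinuousOn.intervalIntegrable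
    rwa [Set.uIcc_of_le hab]
  have hbound : ∀ t ∈ Set.Icc a b, ‖f t - f c‖ ≤ M * |t - c| := by
    intro t ht
    have := (convex_Icc a b).norm_image_sub_le_of_norm_hasDerivWithin_le
      (fun x hx => (hderiv x hx).hasDerivWithinAt) hM hcmem ht
    simpa [Real.norm_eq_abs] using this
  have hrw : (∫ s in a..b, f s) - (b - a) • f c = ∫ s in a..b, (f s - f c) := by
    rw [intervalIntegral.integral_sub hfi intervalIntegrable_const,
      intervalIntegral.integral_const]
  rw [hrw]
  have habs : IntervalIntegrable (fun s => M * |s - c|) volume a b :=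
    (Continuous.mul continuous_const ((continuous_id.sub continuous_const).abs)).intervalIntegrable _ _
  have hni : IntervalIntegrable (fun s => ‖f s - f c‖) volume a b := by
    apply ContinuousOn.intervalIntegrable
    rw [Set.uIcc_of_le hab]
    exact (hfc.sub continuousOn_const).norm
  have step1 : ‖∫ s in a..b, (f s - f c)‖ ≤ ∫ s in a..b, M * |s - c| := by
    refine le_trans (intervalIntegral.norm_integral_le_integral_norm hab) ?_
    apply intervalIntegral.integral_mono_on hab hni habs
    exact hbound
  have e1 : (∫ s in a..c, |s - c|) = (c - a) ^ 2 / 2 := by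
    have hcg : ∀ s ∈ Set.uIcc a c, |s - c| = c - s := by
      intro s hs
      rw [Set.uIcc_of_le hac] at hs
      rw [abs_of_nonpos (by linarith [hs.2])]; ring
    rw [intervalIntegral.integral_congr hcg,
      intervalIntegral.integral_sub intervalIntegrable_const
        (intervalIntegrable_id),
      intervalIntegral.integral_const, integral_id]
    simp [smul_eq_mul]; ring
  have e2 : (∫ s in c..b, |s - c|) = (b - c) ^ 2 / 2 := by
    have hcg : ∀ s ∈ Set.uIcc c b, |s - c| = s - c := by
      intro s hs
      rw [Set.uIcc_of_le hcb] at hs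
      exact abs_of_nonneg (by linarith [hs.1])
    rw [intervalIntegral.integral_congr hcg,
      intervalIntegral.integral_sub intervalIntegrable_id
        intervalIntegrable_const,
      intervalIntegral.integral_const, integral_id]
    simp [smul_eq_mul]; ring
  have habs' : Continuous (fun s : ℝ => |s - c|) :=
    (continuous_id.sub continuous_const).abs
  have esum : (∫ s in a..b, |s - c|) = (b - a) ^ 2 / 4 := by
    rw [← intervalIntegral.integral_add_adjacent_intervals
      (habs'.intervalIntegrable a c) (habs'.intervalIntegrable c b), e1, e2, hc]
    ring
  calc ‖∫ s in a..b, (f s - f c)‖ ≤ ∫ s in a..b, M * |s - c| := step1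
    _ = M * ∫ s in a..b, |s - c| := by rw [intervalIntegral.integral_const_mul]
    _ = M * (b - a) ^ 2 / 4 := by rw [esum]; ring

theorem stmt14 {X : Type*} [NormedAddCommGroup X] [NormedSpace ℝ X] [CompleteSpace X]
    {a b : ℝ} (hab : a < b) {f f' : ℝ → X}
    (hderiv : ∀ t ∈ Set.Icc a b, HasDerivAt f (f' t) t)
    {M : ℝ} (hM : ∀ s ∈ Set.Icc a b, ‖f' s‖ ≤ M) :
    ‖(∫ s in a..b, f s) - ((b - a) / 2) • (f ((3 * a + b) / 4) + f ((a + 3 * b) / 4))‖ ≤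
      (1 / 8) * (b - a) ^ 2 * M := by
  set m : ℝ := (a + b) / 2 with hm
  have ham : a ≤ m := by rw [hm]; linarith
  have hmb : m ≤ b := by rw [hm]; linarith
  have hsub1 : Set.Icc a m ⊆ Set.Icc a b := Set.Icc_subset_Icc le_rfl hmb
  have hsub2 : Set.Icc m b ⊆ Set.Icc a b := Set.Icc_subset_Icc ham le_rfl
  have h1 := midpoint_bound14 ham (fun t ht => hderiv t (hsub1 ht))
    (fun s hs => hM s (hsub1 hs))
  have h2 := midpoint_bound14 hmb (fun t ht => hderiv t (hsub2 ht))
    (fun s hs => hM s (hsub2 hs))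
  have hp : (a + m) / 2 = (3 * a + b) / 4 := by rw [hm]; ring
  have hq : (m + b) / 2 = (a + 3 * b) / 4 := by rw [hm]; ring
  rw [hp] at h1
  rw [hq] at h2
  have hfc : ContinuousOn f (Set.Icc a b) := fun t ht =>
    (hderiv t ht).continuousAt.continuousWithinAt
  have hfi1 : IntervalIntegrable f volume a m := by
    apply ContinuousOn.intervalIntegrable
    rw [Set.uIcc_of_le ham]; exact hfc.mono hsub1
  have hfi2 : IntervalIntegrable f volume m b := by
    apply ContinuousOn.intervalIntegrable
    rw [Set.uIcc_of_le hmb]; exact hfc.mono hsub2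
  have hsplit : (∫ s in a..b, f s) = (∫ s in a..m, f s) + ∫ s in m..b, f s :=
    (intervalIntegral.integral_add_adjacent_intervals hfi1 hfi2).symm
  have hma : m - a = (b - a) / 2 := by rw [hm]; ring
  have hbm : b - m = (b - a) / 2 := by rw [hm]; ring
  have hdecomp : (∫ s in a..b, f s) -
      ((b - a) / 2) • (f ((3 * a + b) / 4) + f ((a + 3 * b) / 4)) =
      ((∫ s in a..m, f s) - (m - a) • f ((3 * a + b) / 4)) +
      ((∫ s in m..b, f s) - (b - m) • f ((a + 3 * b) / 4)) := by
    rw [hsplit, hma, hbm, smul_add]; abel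
  rw [hdecomp]
  have hMnn : 0 ≤ M := le_trans (norm_nonneg _) (hM a ⟨le_rfl, le_of_lt hab⟩)
  calc _ ≤ ‖(∫ s in a..m, f s) - (m - a) • f ((3 * a + b) / 4)‖ +
        ‖(∫ s in m..b, f s) - (b - m) • f ((a + 3 * b) / 4)‖ := norm_add_le _ _
    _ ≤ M * (m - a) ^ 2 / 4 + M * (b - m) ^ 2 / 4 := add_le_add h1 h2
    _ ≤ (1 / 8) * (b - a) ^ 2 * M := by rw [hma, hbm]; nlinarith [sq_nonneg (b - a)]
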